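/- Along solutions the differential of the Hamilton–Pontryagin action reduces to boundary terms (the canonical one-form): if (q,v,p) satisfies the pathwise stochastic Hamilton–Pontryagin equations (q' = v, p = (∂L/∂v)(q,v), p ∈ C¹ with p' = (∂L/∂q)(q,v) + Σ_i (∂γ_i/∂q)(q) w_i'), then for every variation (δq,δv,δp) with δq ∈ C¹([a,b],ℝⁿ) (not required to vanish at the endpoints) and δv, δp ∈ C⁰([a,b],ℝⁿ), d/dε|_{ε=0} 𝔊(q+εδq, v+εδv, p+εδp) = ⟨p(b), δq(b)⟩ − ⟨p(a), δq(a)⟩. -/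

import Mathlib

/-!
The action is differentiated under the integral sign: along the line
`ε ↦ (q, v, p) + ε (δq, δv, δp)` the integrand and its `ε`-derivative are jointly continuous,
hence dominated on a compact rectangle of parameters.
At `ε = 0`, on a solution, `q' = v` kills the `δp`-term, `p = ∂L/∂v` cancels the `δv`-terms, and
`p' = ∂L/∂q + ∑ᵢ wᵢ' ∇γᵢ` collects the `δq`-terms, so the integrand becomes
`⟪p, δq'⟫ + ⟪p', δq⟫ = (d/dt) ⟪p, δq⟫` and the fundamental theorem of calculus leaves the
canonical one-form at the endpoints.
-/

open scoped RealInnerProductSpace Interval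
open Set

/-- The pathwise Hamilton–Pontryagin action
`𝔊(q,v,p) = ∫_a^b [ L(q,v) + ∑_i γ_i(q) w_i' + ⟨p, q' − v⟩ ] dt`,
written as a functional of the path `q`, its derivative `q'`, the velocity `v`
and the momentum `p`. -/
noncomputable def HPaction (a b : ℝ) (n m : ℕ)
    (L : EuclideanSpace ℝ (Fin n) × EuclideanSpace ℝ (Fin n) → ℝ)
    (γ : ℕ → EuclideanSpace ℝ (Fin n) → ℝ) (w' : ℕ → ℝ → ℝ)
    (q q' v p : ℝ → EuclideanSpace ℝ (Fin n)) : ℝ :=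
  ∫ t in a..b,
    (L (q t, v t) + ∑ i ∈ Finset.range m, γ i (q t) * w' i t
      + ⟪p t, q' t - v t⟫)

theorem ContinuousOn.snd' {X Y Z : Type*} [TopologicalSpace X] [TopologicalSpace Y]
    [TopologicalSpace Z] {f : Y → Z} {s : Set X} {t : Set Y} (hf : ContinuousOn f t) :
    ContinuousOn (fun x : X × Y => f x.2) (s ×ˢ t) :=
  hf.comp continuous_snd.continuousOn fun _ hx => hx.2

theorem DifferentiableAt.fderiv_apply_prodMk {E F G : Type*} [NormedAddCommGroup E]
    [NormedSpace ℝ E] [NormedAddCommGroup F] [NormedSpace ℝ F] [NormedAddCommGroup G]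
    [NormedSpace ℝ G] {f : E × F → G} {x : E} {y : F} (hf : DifferentiableAt ℝ f (x, y))
    (dx : E) (dy : F) :
    fderiv ℝ f (x, y) (dx, dy) = fderiv ℝ (fun x' => f (x', y)) x dx
      + fderiv ℝ (fun y' => f (x, y')) y dy := by
  have hx : HasFDerivAt (fun x' => f (x', y)) _ x :=
    hf.hasFDerivAt.comp x (hasFDerivAt_prodMk_left x y)
  have hy : HasFDerivAt (fun y' => f (x, y')) _ y :=
    hf.hasFDerivAt.comp y (hasFDerivAt_prodMk_right x y)
  rw [hx.fderiv, hy.fderiv]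
  simp [← map_add]

theorem hasDerivAt_intervalIntegral_of_continuousOn {E : Type*} [NormedAddCommGroup E]
    [NormedSpace ℝ E] {a b : ℝ} {F F' : ℝ → ℝ → E}
    (hF : ∀ ε, ContinuousOn (F ε) [[a, b]])
    (hF' : ContinuousOn (Function.uncurry F') (univ ×ˢ [[a, b]]))
    (hd : ∀ t ∈ [[a, b]], ∀ ε, HasDerivAt (F · t) (F' ε t) ε) (ε₀ : ℝ) :
    HasDerivAt (fun ε => ∫ t in a..b, F ε t) (∫ t in a..b, F' ε₀ t) ε₀ := by
  obtain ⟨C, hC⟩ := (isCompact_closedBall ε₀ 1).prod isCompact_uIcc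
    |>.exists_bound_of_continuousOn (hF'.mono (prod_mono (subset_univ _) le_rfl))
  have hF'₀ : ContinuousOn (F' ε₀) [[a, b]] :=
    hF'.comp (Continuous.prodMk_right ε₀).continuousOn fun t ht => ⟨mem_univ _, ht⟩
  refine (intervalIntegral.hasDerivAt_integral_of_dominated_loc_of_deriv_le
    (bound := fun _ => C) (Metric.ball_mem_nhds ε₀ one_pos)
    (.of_forall fun ε => ((hF ε).mono uIoc_subset_uIcc).aestronglyMeasurable measurableSet_uIoc)
    ((hF ε₀).intervalIntegrable)
    ((hF'₀.mono uIoc_subset_uIcc).aestronglyMeasurable measurableSet_uIoc)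
    (.of_forall fun t ht ε hε => hC (ε, t) ⟨Metric.ball_subset_closedBall hε, uIoc_subset_uIcc ht⟩)
    intervalIntegrable_const
    (.of_forall fun t ht ε _ => hd t (uIoc_subset_uIcc ht) ε)).2

theorem integral_inner_add_inner_eq_sub {E : Type*} [NormedAddCommGroup E]
    [InnerProductSpace ℝ E] {a b : ℝ} (hab : a ≤ b) {f f' g g' : ℝ → E}
    (hf : ∀ t ∈ Icc a b, HasDerivWithinAt f (f' t) (Icc a b) t)
    (hg : ∀ t ∈ Icc a b, HasDerivWithinAt g (g' t) (Icc a b) t)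
    (hf' : ContinuousOn f' (Icc a b)) (hg' : ContinuousOn g' (Icc a b)) :
    ∫ t in a..b, (⟪f t, g' t⟫ + ⟪f' t, g t⟫) = ⟪f b, g b⟫ - ⟪f a, g a⟫ := by
  have hfc : ContinuousOn f (Icc a b) := fun t ht => (hf t ht).continuousWithinAt
  have hgc : ContinuousOn g (Icc a b) := fun t ht => (hg t ht).continuousWithinAt
  refine intervalIntegral.integral_eq_sub_of_hasDeriv_right_of_le (f := fun t => ⟪f t, g t⟫) hab
    (hfc.inner hgc) (fun t ht => ?_) ?_
  · have hI : Icc a b ∈ nhds t := Icc_mem_nhds ht.1 ht.2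
    exact (((hf t (Ioo_subset_Icc_self ht)).hasDerivAt hI).inner ℝ
      ((hg t (Ioo_subset_Icc_self ht)).hasDerivAt hI)).hasDerivWithinAt
  · rw [← uIcc_of_le hab] at hfc hgc hf' hg'
    exact ((hfc.inner hg').add (hf'.inner hgc)).intervalIntegrable

section HamiltonPontryagin

variable {E : Type*} [NormedAddCommGroup E] [InnerProductSpace ℝ E]
  (L : E × E → ℝ) (γ : ℕ → E → ℝ) (m : ℕ)

/-- `c i` stands for `wᵢ'(t)` at a fixed time `t`, so that the integrand of `HPaction` is
`hpLagrangian L γ m (w' · t) (q t) (q' t) (v t) (p t)`. -/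
def hpLagrangian (c : ℕ → ℝ) (x x' u y : E) : ℝ :=
  L (x, u) + ∑ i ∈ Finset.range m, γ i x * c i + ⟪y, x' - u⟫

noncomputable def hpLagrangianVariation (c : ℕ → ℝ) (x x' u y δx δx' δu δy : E) : ℝ :=
  fderiv ℝ L (x, u) (δx, δu) + ∑ i ∈ Finset.range m, fderiv ℝ (γ i) x δx * c i
    + (⟪y, δx' - δu⟫ + ⟪δy, x' - u⟫)

variable {L γ m}

theorem hasDerivAt_hpLagrangian_add_smul (hL : Differentiable ℝ L)
    (hγ : ∀ i < m, Differentiable ℝ (γ i)) (c : ℕ → ℝ) (x x' u y δx δx' δu δy : E) (ε : ℝ) :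
    HasDerivAt
      (fun ε : ℝ => hpLagrangian L γ m c (x + ε • δx) (x' + ε • δx') (u + ε • δu) (y + ε • δy))
      (hpLagrangianVariation L γ m c (x + ε • δx) (x' + ε • δx') (u + ε • δu) (y + ε • δy)
        δx δx' δu δy) ε := by
  have line : ∀ z δz : E, HasDerivAt (fun ε : ℝ => z + ε • δz) δz ε := fun z δz => by
    simpa using ((hasDerivAt_id ε).smul_const δz).const_add z
  have hLline := (hL _).hasFDerivAt.comp_hasDerivAt ε ((line x δx).prodMk (line u δu))
  have hγline := HasDerivAt.fun_sum fun i hi =>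
    ((hγ i (Finset.mem_range.mp hi) _).hasFDerivAt.comp_hasDerivAt ε (line x δx)).mul_const (c i)
  exact (hLline.add hγline).add ((line y δy).inner ℝ ((line x' δx').sub (line u δu)))

theorem hpLagrangianVariation_eq_of_solution [CompleteSpace E] {c : ℕ → ℝ} {x x' u y y' : E}
    (hL : DifferentiableAt ℝ L (x, u)) (hx' : x' = u)
    (hy : y = gradient (fun u' => L (x, u')) u)
    (hy' : y' = gradient (fun x' => L (x', u)) x + ∑ i ∈ Finset.range m, c i • gradient (γ i) x)
    (δx δx' δu δy : E) :
    hpLagrangianVariation L γ m c x x' u y δx δx' δu δy = ⟪y, δx'⟫ + ⟪y', δx⟫ := by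
  subst hx'
  rw [hpLagrangianVariation, hL.fderiv_apply_prodMk, hy', inner_add_left, sum_inner, sub_self,
    inner_zero_right, inner_sub_right, hy]
  simp only [inner_gradient_left, real_inner_smul_left, mul_comm (c _)]
  ring

section Continuity

variable {α : Type*} [TopologicalSpace α] {s : Set α} {c : ℕ → α → ℝ} {X X' U Y : α → E}

theorem ContinuousOn.hpLagrangian (hL : Continuous L) (hγ : ∀ i < m, Continuous (γ i))
    (hc : ∀ i < m, ContinuousOn (c i) s) (hX : ContinuousOn X s) (hX' : ContinuousOn X' s)
    (hU : ContinuousOn U s) (hY : ContinuousOn Y s) :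
    ContinuousOn (fun z => hpLagrangian L γ m (c · z) (X z) (X' z) (U z) (Y z)) s :=
  ((hL.comp_continuousOn (hX.prodMk hU)).add (continuousOn_finsetSum _ fun i hi =>
    ((hγ i (Finset.mem_range.mp hi)).comp_continuousOn hX).mul (hc i (Finset.mem_range.mp hi)))).add
    (hY.inner (hX'.sub hU))

theorem ContinuousOn.hpLagrangianVariation {δX δX' δU δY : α → E} (hL : ContDiff ℝ 1 L)
    (hγ : ∀ i < m, ContDiff ℝ 1 (γ i)) (hc : ∀ i < m, ContinuousOn (c i) s)
    (hX : ContinuousOn X s) (hX' : ContinuousOn X' s) (hU : ContinuousOn U s)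
    (hY : ContinuousOn Y s) (hδX : ContinuousOn δX s) (hδX' : ContinuousOn δX' s)
    (hδU : ContinuousOn δU s) (hδY : ContinuousOn δY s) :
    ContinuousOn (fun z => hpLagrangianVariation L γ m (c · z) (X z) (X' z) (U z) (Y z)
      (δX z) (δX' z) (δU z) (δY z)) s :=
  ((((hL.continuous_fderiv one_ne_zero).comp_continuousOn (hX.prodMk hU)).clm_apply
      (hδX.prodMk hδU)).add (continuousOn_finsetSum _ fun i hi =>
    ((((hγ i (Finset.mem_range.mp hi)).continuous_fderiv one_ne_zero).comp_continuousOn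
      hX).clm_apply hδX).mul (hc i (Finset.mem_range.mp hi)))).add
    ((hY.inner (hδX'.sub hδU)).add (hδY.inner (hX'.sub hU)))

end Continuity

theorem hasDerivAt_integral_hpLagrangian_add_smul {a b : ℝ} (hab : a ≤ b) (hL : ContDiff ℝ 1 L)
    (hγ : ∀ i < m, ContDiff ℝ 1 (γ i)) {c : ℕ → ℝ → ℝ} (hc : ∀ i < m, ContinuousOn (c i) (Icc a b))
    {x x' u y δx δx' δu δy : ℝ → E} (hx : ContinuousOn x (Icc a b))
    (hx' : ContinuousOn x' (Icc a b)) (hu : ContinuousOn u (Icc a b))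
    (hy : ContinuousOn y (Icc a b)) (hδx : ContinuousOn δx (Icc a b))
    (hδx' : ContinuousOn δx' (Icc a b)) (hδu : ContinuousOn δu (Icc a b))
    (hδy : ContinuousOn δy (Icc a b)) :
    HasDerivAt (fun ε : ℝ => ∫ t in a..b, hpLagrangian L γ m (c · t)
        (x t + ε • δx t) (x' t + ε • δx' t) (u t + ε • δu t) (y t + ε • δy t))
      (∫ t in a..b, hpLagrangianVariation L γ m (c · t) (x t) (x' t) (u t) (y t)
        (δx t) (δx' t) (δu t) (δy t)) 0 := by
  have line : ∀ {f δf : ℝ → E}, ContinuousOn f (Icc a b) → ContinuousOn δf (Icc a b) →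
      ContinuousOn (fun z : ℝ × ℝ => f z.2 + z.1 • δf z.2) (univ ×ˢ Icc a b) :=
    fun hf hδf => hf.snd'.add (continuous_fst.continuousOn.smul hδf.snd')
  rw [← uIcc_of_le hab] at *
  simpa only [zero_smul, add_zero] using hasDerivAt_intervalIntegral_of_continuousOn
    (F := fun ε t => hpLagrangian L γ m (c · t) (x t + ε • δx t) (x' t + ε • δx' t)
      (u t + ε • δu t) (y t + ε • δy t))
    (F' := fun ε t => hpLagrangianVariation L γ m (c · t) (x t + ε • δx t) (x' t + ε • δx' t)
      (u t + ε • δu t) (y t + ε • δy t) (δx t) (δx' t) (δu t) (δy t))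
    (fun ε => ContinuousOn.hpLagrangian hL.continuous (fun i hi => (hγ i hi).continuous) hc
      (hx.add (hδx.const_smul ε)) (hx'.add (hδx'.const_smul ε)) (hu.add (hδu.const_smul ε))
      (hy.add (hδy.const_smul ε)))
    (ContinuousOn.hpLagrangianVariation hL hγ (fun i hi => (hc i hi).snd') (line hx hδx)
      (line hx' hδx') (line hu hδu) (line hy hδy) hδx.snd' hδx'.snd' hδu.snd' hδy.snd')
    (fun t _ => hasDerivAt_hpLagrangian_add_smul (hL.differentiable one_ne_zero)
      (fun i hi => (hγ i hi).differentiable one_ne_zero) _ _ _ _ _ _ _ _ _) 0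

end HamiltonPontryagin

theorem hp_action_differential_on_solutions_general
    (a b : ℝ) (hab : a < b) (n m : ℕ)
    (L : EuclideanSpace ℝ (Fin n) × EuclideanSpace ℝ (Fin n) → ℝ)
    (hL : ContDiff ℝ 2 L)
    (γ : ℕ → EuclideanSpace ℝ (Fin n) → ℝ)
    (hγ : ∀ i < m, ContDiff ℝ 2 (γ i))
    (w' : ℕ → ℝ → ℝ)
    (hw' : ∀ i < m, ContinuousOn (w' i) (Set.Icc a b))
    (q q' v p p' : ℝ → EuclideanSpace ℝ (Fin n))
    (hq : ∀ t ∈ Set.Icc a b, HasDerivWithinAt q (q' t) (Set.Icc a b) t)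
    (hq' : ContinuousOn q' (Set.Icc a b))
    (hv : ContinuousOn v (Set.Icc a b))
    (hp : ∀ t ∈ Set.Icc a b, HasDerivWithinAt p (p' t) (Set.Icc a b) t)
    (hp' : ContinuousOn p' (Set.Icc a b))
    -- the pathwise stochastic Hamilton–Pontryagin equations
    (heq1 : ∀ t ∈ Set.Icc a b, q' t = v t)
    (heq2 : ∀ t ∈ Set.Icc a b, p t = gradient (fun u => L (q t, u)) (v t))
    (heq3 : ∀ t ∈ Set.Icc a b,
        p' t = gradient (fun x => L (x, v t)) (q t)
          + ∑ i ∈ Finset.range m, w' i t • gradient (γ i) (q t)) :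
    ∀ δq δq' δv δp : ℝ → EuclideanSpace ℝ (Fin n),
      (∀ t ∈ Set.Icc a b, HasDerivWithinAt δq (δq' t) (Set.Icc a b) t) →
      ContinuousOn δq' (Set.Icc a b) →
      ContinuousOn δv (Set.Icc a b) → ContinuousOn δp (Set.Icc a b) →
      deriv (fun ε : ℝ => HPaction a b n m L γ w'
          (fun t => q t + ε • δq t) (fun t => q' t + ε • δq' t)
          (fun t => v t + ε • δv t) (fun t => p t + ε • δp t)) 0
        = ⟪p b, δq b⟫ - ⟪p a, δq a⟫ := by
  intro δq δq' δv δp hδq hδq' hδv hδp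
  have hL₁ : ContDiff ℝ 1 L := hL.of_le one_le_two
  have hfirstVariation := hasDerivAt_integral_hpLagrangian_add_smul hab.le hL₁
    (fun i hi => (hγ i hi).of_le one_le_two) hw' (fun t ht => (hq t ht).continuousWithinAt) hq'
    hv (fun t ht => (hp t ht).continuousWithinAt) (fun t ht => (hδq t ht).continuousWithinAt)
    hδq' hδv hδp
  have hsolution : EqOn (fun t => hpLagrangianVariation L γ m (w' · t) (q t) (q' t) (v t) (p t)
      (δq t) (δq' t) (δv t) (δp t)) (fun t => ⟪p t, δq' t⟫ + ⟪p' t, δq t⟫) [[a, b]] := by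
    intro t ht
    rw [uIcc_of_le hab.le] at ht
    exact hpLagrangianVariation_eq_of_solution (hL₁.differentiable one_ne_zero _) (heq1 t ht)
      (heq2 t ht) (heq3 t ht) _ _ _ _
  calc _ = _ := hfirstVariation.deriv
    _ = ∫ t in a..b, (⟪p t, δq' t⟫ + ⟪p' t, δq t⟫) := intervalIntegral.integral_congr hsolution
    _ = _ := integral_inner_add_inner_eq_sub hab.le hp hδq hp' hδq'

/-- Along solutions of the pathwise stochastic Hamilton–Pontryagin equations
the differential of the Hamilton–Pontryagin action reduces to the boundary
terms given by the canonical one-form: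
`d𝔊·(δq,δv,δp) = ⟨p(b), δq(b)⟩ − ⟨p(a), δq(a)⟩`. -/
theorem hp_action_differential_on_solutions
    (a b : ℝ) (hab : a < b) (n m : ℕ) (hn : 1 ≤ n)
    (L : EuclideanSpace ℝ (Fin n) × EuclideanSpace ℝ (Fin n) → ℝ)
    (hL : ContDiff ℝ 2 L)
    (γ : ℕ → EuclideanSpace ℝ (Fin n) → ℝ)
    (hγ : ∀ i < m, ContDiff ℝ 2 (γ i))
    (w w' : ℕ → ℝ → ℝ)
    (hw : ∀ i < m, ∀ t ∈ Set.Icc a b, HasDerivWithinAt (w i) (w' i t) (Set.Icc a b) t)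
    (hw' : ∀ i < m, ContinuousOn (w' i) (Set.Icc a b))
    (q q' v p p' : ℝ → EuclideanSpace ℝ (Fin n))
    (hq : ∀ t ∈ Set.Icc a b, HasDerivWithinAt q (q' t) (Set.Icc a b) t)
    (hq' : ContinuousOn q' (Set.Icc a b))
    (hv : ContinuousOn v (Set.Icc a b))
    (hp : ∀ t ∈ Set.Icc a b, HasDerivWithinAt p (p' t) (Set.Icc a b) t)
    (hp' : ContinuousOn p' (Set.Icc a b))
    -- the pathwise stochastic Hamilton–Pontryagin equations
    (heq1 : ∀ t ∈ Set.Icc a b, q' t = v t)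
    (heq2 : ∀ t ∈ Set.Icc a b, p t = gradient (fun u => L (q t, u)) (v t))
    (heq3 : ∀ t ∈ Set.Icc a b,
        p' t = gradient (fun x => L (x, v t)) (q t)
          + ∑ i ∈ Finset.range m, w' i t • gradient (γ i) (q t)) :
    ∀ δq δq' δv δp : ℝ → EuclideanSpace ℝ (Fin n),
      (∀ t ∈ Set.Icc a b, HasDerivWithinAt δq (δq' t) (Set.Icc a b) t) →
      ContinuousOn δq' (Set.Icc a b) →
      ContinuousOn δv (Set.Icc a b) → ContinuousOn δp (Set.Icc a b) →
      deriv (fun ε : ℝ => HPaction a b n m L γ w'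
          (fun t => q t + ε • δq t) (fun t => q' t + ε • δq' t)
          (fun t => v t + ε • δv t) (fun t => p t + ε • δp t)) 0
        = ⟪p b, δq b⟫ - ⟪p a, δq a⟫ :=
  hp_action_differential_on_solutions_general a b hab n m L hL γ hγ w' hw' q q' v p p' hq hq' hv hp
    hp' heq1 heq2 heq3
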